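/- arXiv:1605.04489 — 2 statements merged into one kernel-verified Lean document; each statement's English description precedes it below -/
import Mathlib

section
/- For the flat distributive law Λ† of the double copresheaf 2-monad 𝔓†𝔓 over the presheaf 2-monad 𝔓 given by Λ†_X = (y_X^!)^{†!}·y_{P†PPX}:P†PPX→P(P†PX), there is a 2-isomorphism (Λ†,Q)-Alg ≅ Q-Cls: lax Λ†-algebra structures p:P†PX→PX on a Q-category X correspond bijectively to Q-closure operations on PX, and lax Λ†-homomorphisms correspond exactly to the continuous Q-functors between Q-closure spaces. -/
/-!
Common framework: quantaloids, `Q`-categories, `Q`-functors, `Q`-distributors,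
(co)presheaf constructions, 2-monads on `Q`-Cat, lax distributive laws over the
presheaf 2-monad, and lax extensions to `Q`-Dist.
-/

set_option autoImplicit false

universe u

namespace QT

/-- A (small) quantaloid: a category enriched in complete lattices, with
composition preserving suprema in each variable. -/
structure Quantaloid : Type (u + 1) where
  Obj : Type u
  Hom : Obj → Obj → Type u
  lat : ∀ a b, CompleteLattice (Hom a b)
  comp : ∀ {a b c}, Hom b c → Hom a b → Hom a c
  idm : ∀ a, Hom a a
  comp_assoc : ∀ {a b c d} (w : Hom c d) (v : Hom b c) (u : Hom a b),
    comp (comp w v) u = comp w (comp v u)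
  comp_idm : ∀ {a b} (u : Hom a b), comp u (idm a) = u
  idm_comp : ∀ {a b} (u : Hom a b), comp (idm b) u = u
  comp_sSup : ∀ {a b c} (v : Hom b c) (S : Set (Hom a b)),
    comp v (sSup S) = ⨆ u ∈ S, comp v u
  sSup_comp : ∀ {a b c} (S : Set (Hom b c)) (u : Hom a b),
    comp (sSup S) u = ⨆ v ∈ S, comp v u

attribute [instance] Quantaloid.lat

namespace Quantaloid

variable {Q : Quantaloid.{u}}

theorem comp_iSup {a b c : Q.Obj} (v : Q.Hom b c) {ι : Sort*} (f : ι → Q.Hom a b) :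
    Q.comp v (⨆ i, f i) = ⨆ i, Q.comp v (f i) := by
  rw [iSup, Q.comp_sSup, iSup_range]

theorem iSup_comp {a b c : Q.Obj} {ι : Sort*} (f : ι → Q.Hom b c) (u : Q.Hom a b) :
    Q.comp (⨆ i, f i) u = ⨆ i, Q.comp (f i) u := by
  rw [iSup, Q.sSup_comp, iSup_range]

theorem comp_le_comp {a b c : Q.Obj} {v v' : Q.Hom b c} {u u' : Q.Hom a b}
    (hv : v ≤ v') (hu : u ≤ u') : Q.comp v u ≤ Q.comp v' u' := by
  have h1 : Q.comp v' u ≤ Q.comp v' u' := by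
    have h := Q.comp_sSup v' {u, u'}
    rw [sSup_pair, sup_eq_right.mpr hu] at h
    rw [h]
    exact le_biSup (fun x => Q.comp v' x) (Set.mem_insert _ _)
  have h2 : Q.comp v u ≤ Q.comp v' u := by
    have h := Q.sSup_comp {v, v'} u
    rw [sSup_pair, sup_eq_right.mpr hv] at h
    rw [h]
    exact le_biSup (fun x => Q.comp x u) (Set.mem_insert _ _)
  exact le_trans h2 h1

/-- Internal hom `w ↙ u` (right adjoint to `- ∘ u`). -/
def lda {a b c : Q.Obj} (w : Q.Hom a c) (u : Q.Hom a b) : Q.Hom b c :=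
  sSup {v | Q.comp v u ≤ w}

/-- Internal hom `v ↘ w` (right adjoint to `v ∘ -`). -/
def rda {a b c : Q.Obj} (v : Q.Hom b c) (w : Q.Hom a c) : Q.Hom a b :=
  sSup {u | Q.comp v u ≤ w}

theorem le_lda {a b c : Q.Obj} {v : Q.Hom b c} {u : Q.Hom a b} {w : Q.Hom a c} :
    Q.comp v u ≤ w ↔ v ≤ lda w u := by
  constructor
  · exact fun h => le_sSup h
  · intro h
    calc Q.comp v u ≤ Q.comp (lda w u) u := comp_le_comp h le_rfl
      _ ≤ w := by
          rw [lda, Q.sSup_comp]; exact iSup₂_le fun v' hv' => hv'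

theorem le_rda {a b c : Q.Obj} {v : Q.Hom b c} {u : Q.Hom a b} {w : Q.Hom a c} :
    Q.comp v u ≤ w ↔ u ≤ rda v w := by
  constructor
  · exact fun h => le_sSup h
  · intro h
    calc Q.comp v u ≤ Q.comp v (rda v w) := comp_le_comp le_rfl h
      _ ≤ w := by
          rw [rda, Q.comp_sSup]; exact iSup₂_le fun u' hu' => hu'

end Quantaloid

variable {Q : Quantaloid.{u}}

/-- `Q`-relations between families of sets indexed by the objects of `Q`
(i.e. sets over `ob Q`, presented fibrewise). -/
abbrev QRel (Q : Quantaloid.{u}) (X Y : Q.Obj → Type u) : Type u :=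
  ∀ p q, X p → Y q → Q.Hom p q

/-- Composition of `Q`-relations. -/
def QRel.comp {X Y Z : Q.Obj → Type u} (ψ : QRel Q Y Z) (φ : QRel Q X Y) : QRel Q X Z :=
  fun p r x z => ⨆ q, ⨆ y : Y q, Q.comp (ψ q r y z) (φ p q x y)

theorem QRel.comp_mono {X Y Z : Q.Obj → Type u} {ψ ψ' : QRel Q Y Z} {φ φ' : QRel Q X Y}
    (h1 : ψ ≤ ψ') (h2 : φ ≤ φ') : QRel.comp ψ φ ≤ QRel.comp ψ' φ' := by
  intro p r x z
  exact iSup_mono fun q => iSup_mono fun y =>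
    Quantaloid.comp_le_comp (h1 q r y z) (h2 p q x y)

theorem QRel.comp_assoc {W X Y Z : Q.Obj → Type u}
    (χ : QRel Q Y Z) (ψ : QRel Q X Y) (φ : QRel Q W X) :
    QRel.comp (QRel.comp χ ψ) φ = QRel.comp χ (QRel.comp ψ φ) := by
  funext p s w z
  simp only [QRel.comp, Quantaloid.iSup_comp, Quantaloid.comp_iSup]
  apply le_antisymm
  · exact iSup₂_le fun q x => iSup₂_le fun r y =>
      le_iSup_of_le r (le_iSup_of_le y (le_iSup_of_le q (le_iSup_of_le x
        (Q.comp_assoc _ _ _).le)))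
  · exact iSup₂_le fun r y => iSup₂_le fun q x =>
      le_iSup_of_le q (le_iSup_of_le x (le_iSup_of_le r (le_iSup_of_le y
        (Q.comp_assoc _ _ _).ge)))

/-- A (small) `Q`-category. -/
structure QCat (Q : Quantaloid.{u}) : Type (u + 1) where
  el : Q.Obj → Type u
  hom : QRel Q el el
  refl : ∀ p (x : el p), Q.idm p ≤ hom p p x x
  trans : QRel.comp hom hom ≤ hom

/-- Pointwise transitivity in a `Q`-category. -/
theorem QCat.hom_comp_le (X : QCat Q) {p q r : Q.Obj}
    (x : X.el p) (y : X.el q) (z : X.el r) :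
    Q.comp (X.hom q r y z) (X.hom p q x y) ≤ X.hom p r x z :=
  le_trans
    (le_iSup_of_le q (le_iSup (fun y' : X.el q => Q.comp (X.hom q r y' z) (X.hom p q x y')) y))
    (X.trans p r x z)

/-- Any `Q`-relation into a `Q`-category embeds into its post-composite with the hom. -/
theorem QRel.le_hom_comp {W : Q.Obj → Type u} {Z : QCat Q} (ρ : QRel Q W Z.el) :
    ρ ≤ QRel.comp Z.hom ρ := by
  intro p q x z
  calc ρ p q x z = Q.comp (Q.idm q) (ρ p q x z) := (Q.idm_comp _).symm
    _ ≤ Q.comp (Z.hom q q z z) (ρ p q x z) := Quantaloid.comp_le_comp (Z.refl q z) le_rfl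
    _ ≤ _ := le_iSup_of_le q
        (le_iSup (fun z' : Z.el q => Q.comp (Z.hom q q z' z) (ρ p q x z')) z)

/-- Any `Q`-relation out of a `Q`-category embeds into its pre-composite with the hom. -/
theorem QRel.le_comp_hom {X : QCat Q} {W : Q.Obj → Type u} (ρ : QRel Q X.el W) :
    ρ ≤ QRel.comp ρ X.hom := by
  intro p q x z
  calc ρ p q x z = Q.comp (ρ p q x z) (Q.idm p) := (Q.comp_idm _).symm
    _ ≤ Q.comp (ρ p q x z) (X.hom p p x x) := Quantaloid.comp_le_comp le_rfl (X.refl p x)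
    _ ≤ _ := le_iSup_of_le p
        (le_iSup (fun x' : X.el p => Q.comp (ρ p q x' z) (X.hom p p x x')) x)

/-- A `Q`-functor. -/
structure QFun (X Y : QCat Q) : Type u where
  app : ∀ p, X.el p → Y.el p
  mono : ∀ p q (x : X.el p) (x' : X.el q),
    X.hom p q x x' ≤ Y.hom p q (app p x) (app q x')

def QFun.id (X : QCat Q) : QFun X X :=
  ⟨fun _ x => x, fun _ _ _ _ => le_rfl⟩

def QFun.comp {X Y Z : QCat Q} (g : QFun Y Z) (f : QFun X Y) : QFun X Z :=
  ⟨fun p x => g.app p (f.app p x),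
   fun p q x x' => le_trans (f.mono p q x x') (g.mono p q (f.app p x) (f.app q x'))⟩

/-- The (pointwise) order of `Q`-functors. -/
instance {X Y : QCat Q} : Preorder (QFun X Y) where
  le f g := ∀ p (x : X.el p), Q.idm p ≤ Y.hom p p (f.app p x) (g.app p x)
  le_refl f p x := Y.refl p (f.app p x)
  le_trans f g h h1 h2 := by
    intro p x
    calc Q.idm p = Q.comp (Q.idm p) (Q.idm p) := (Q.comp_idm _).symm
      _ ≤ Q.comp (Y.hom p p (g.app p x) (h.app p x)) (Y.hom p p (f.app p x) (g.app p x)) :=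
          Quantaloid.comp_le_comp (h2 p x) (h1 p x)
      _ ≤ Y.hom p p (f.app p x) (h.app p x) := Y.hom_comp_le _ _ _

/-- A `Q`-distributor between `Q`-categories. -/
structure QDist (X Y : QCat Q) : Type u where
  rel : QRel Q X.el Y.el
  compat : QRel.comp Y.hom (QRel.comp rel X.hom) ≤ rel

instance {X Y : QCat Q} : PartialOrder (QDist X Y) where
  le φ ψ := φ.rel ≤ ψ.rel
  le_refl φ := le_refl φ.rel
  le_trans _ _ _ h h' := by
    intro p q x y
    exact le_trans (h p q x y) (h' p q x y)
  le_antisymm φ ψ h h' := by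
    have hr : φ.rel = ψ.rel := le_antisymm h h'
    cases φ; cases ψ; cases hr; rfl

theorem QDist.hom_comp_le {X Y : QCat Q} (φ : QDist X Y) :
    QRel.comp Y.hom φ.rel ≤ φ.rel :=
  le_trans (QRel.comp_mono le_rfl (QRel.le_comp_hom φ.rel)) φ.compat

theorem QDist.comp_hom_le {X Y : QCat Q} (φ : QDist X Y) :
    QRel.comp φ.rel X.hom ≤ φ.rel :=
  le_trans (QRel.le_hom_comp _) φ.compat

theorem QDist.rel_comp_hom {X Y : QCat Q} (φ : QDist X Y) {p q r : Q.Obj}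
    (x : X.el p) (x' : X.el q) (y : Y.el r) :
    Q.comp (φ.rel q r x' y) (X.hom p q x x') ≤ φ.rel p r x y :=
  le_trans
    (le_iSup_of_le q (le_iSup (fun x'' : X.el q => Q.comp (φ.rel q r x'' y) (X.hom p q x x'')) x'))
    (φ.comp_hom_le p r x y)

theorem QDist.hom_comp_rel {X Y : QCat Q} (φ : QDist X Y) {p q r : Q.Obj}
    (x : X.el p) (y : Y.el q) (y' : Y.el r) :
    Q.comp (Y.hom q r y y') (φ.rel p q x y) ≤ φ.rel p r x y' :=
  le_trans
    (le_iSup_of_le q (le_iSup (fun y'' : Y.el q => Q.comp (Y.hom q r y'' y') (φ.rel p q x y'')) y))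
    (φ.hom_comp_le p r x y')

/-- Composition of `Q`-distributors. -/
def QDist.comp {X Y Z : QCat Q} (ψ : QDist Y Z) (φ : QDist X Y) : QDist X Z :=
  ⟨QRel.comp ψ.rel φ.rel, by
    calc QRel.comp Z.hom (QRel.comp (QRel.comp ψ.rel φ.rel) X.hom)
        = QRel.comp (QRel.comp Z.hom ψ.rel) (QRel.comp φ.rel X.hom) := by
          rw [QRel.comp_assoc, QRel.comp_assoc]
      _ ≤ QRel.comp ψ.rel φ.rel :=
          QRel.comp_mono ψ.hom_comp_le φ.comp_hom_le⟩

/-- The identity distributor `1_X^*` on a `Q`-category. -/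
def QCat.homDist (X : QCat Q) : QDist X X :=
  ⟨X.hom, le_trans (QRel.comp_mono le_rfl X.trans) X.trans⟩

/-- The graph `f_*` of a `Q`-functor. -/
def QFun.graph {X Y : QCat Q} (f : QFun X Y) : QDist X Y :=
  ⟨fun p q x y => Y.hom p q (f.app p x) y, by
    intro p q x y
    simp only [QRel.comp, Quantaloid.comp_iSup, Quantaloid.iSup_comp]
    refine iSup₂_le fun q' y' => iSup₂_le fun p' x' => ?_
    calc Q.comp (Y.hom q' q y' y) (Q.comp (Y.hom p' q' (f.app p' x') y') (X.hom p p' x x'))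
        ≤ Q.comp (Y.hom q' q y' y)
            (Q.comp (Y.hom p' q' (f.app p' x') y') (Y.hom p p' (f.app p x) (f.app p' x'))) :=
          Quantaloid.comp_le_comp le_rfl
            (Quantaloid.comp_le_comp le_rfl (f.mono p p' x x'))
      _ ≤ Q.comp (Y.hom q' q y' y) (Y.hom p q' (f.app p x) y') :=
          Quantaloid.comp_le_comp le_rfl (Y.hom_comp_le _ _ _)
      _ ≤ Y.hom p q (f.app p x) y := Y.hom_comp_le _ _ _⟩

/-- The cograph `f^*` of a `Q`-functor. -/
def QFun.cograph {X Y : QCat Q} (f : QFun X Y) : QDist Y X :=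
  ⟨fun p q y x => Y.hom p q y (f.app q x), by
    intro p q y x
    simp only [QRel.comp, Quantaloid.comp_iSup, Quantaloid.iSup_comp]
    refine iSup₂_le fun q' x' => iSup₂_le fun p' y' => ?_
    calc Q.comp (X.hom q' q x' x) (Q.comp (Y.hom p' q' y' (f.app q' x')) (Y.hom p p' y y'))
        ≤ Q.comp (Y.hom q' q (f.app q' x') (f.app q x))
            (Q.comp (Y.hom p' q' y' (f.app q' x')) (Y.hom p p' y y')) :=
          Quantaloid.comp_le_comp (f.mono q' q x' x) le_rfl
      _ ≤ Q.comp (Y.hom q' q (f.app q' x') (f.app q x)) (Y.hom p q' y (f.app q' x')) :=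
          Quantaloid.comp_le_comp le_rfl (Y.hom_comp_le _ _ _)
      _ ≤ Y.hom p q y (f.app q x) := Y.hom_comp_le _ _ _⟩

/-- The presheaf `Q`-category `P X`. -/
def QCat.P (X : QCat Q) : QCat Q where
  el s := { σ : ∀ p, X.el p → Q.Hom p s //
    ∀ p q (x : X.el p) (x' : X.el q), Q.comp (σ q x') (X.hom p q x x') ≤ σ p x }
  hom s s' σ σ' := ⨅ p, ⨅ x : X.el p, Quantaloid.lda (σ'.1 p x) (σ.1 p x)
  refl := by
    intro s σ
    refine le_iInf fun p => le_iInf fun x => Quantaloid.le_lda.mp ?_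
    rw [Q.idm_comp]
  trans := by
    intro s s'' σ σ''
    refine iSup₂_le fun s' σ' => ?_
    refine le_iInf fun p => le_iInf fun x => Quantaloid.le_lda.mp ?_
    rw [Q.comp_assoc]
    have h1 : Q.comp (⨅ p', ⨅ x' : X.el p', Quantaloid.lda (σ'.1 p' x') (σ.1 p' x'))
        (σ.1 p x) ≤ σ'.1 p x :=
      Quantaloid.le_lda.mpr (le_trans (iInf_le _ p) (iInf_le _ x))
    have h2 : Q.comp (⨅ p', ⨅ x' : X.el p', Quantaloid.lda (σ''.1 p' x') (σ'.1 p' x'))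
        (σ'.1 p x) ≤ σ''.1 p x :=
      Quantaloid.le_lda.mpr (le_trans (iInf_le _ p) (iInf_le _ x))
    exact le_trans (Quantaloid.comp_le_comp le_rfl h1) h2

/-- The copresheaf `Q`-category `P† X`. -/
def QCat.Pd (X : QCat Q) : QCat Q where
  el s := { τ : ∀ q, X.el q → Q.Hom s q //
    ∀ p q (x : X.el p) (x' : X.el q), Q.comp (X.hom p q x x') (τ p x) ≤ τ q x' }
  hom s s' τ τ' := ⨅ q, ⨅ x : X.el q, Quantaloid.rda (τ'.1 q x) (τ.1 q x)
  refl := by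
    intro s τ
    refine le_iInf fun q => le_iInf fun x => Quantaloid.le_rda.mp ?_
    rw [Q.comp_idm]
  trans := by
    intro s s'' τ τ''
    refine iSup₂_le fun s' τ' => ?_
    refine le_iInf fun q => le_iInf fun x => Quantaloid.le_rda.mp ?_
    rw [← Q.comp_assoc]
    have h1 : Q.comp (τ''.1 q x)
        (⨅ q', ⨅ x' : X.el q', Quantaloid.rda (τ''.1 q' x') (τ'.1 q' x')) ≤ τ'.1 q x :=
      Quantaloid.le_rda.mpr (le_trans (iInf_le _ q) (iInf_le _ x))
    have h2 : Q.comp (τ'.1 q x)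
        (⨅ q', ⨅ x' : X.el q', Quantaloid.rda (τ'.1 q' x') (τ.1 q' x')) ≤ τ.1 q x :=
      Quantaloid.le_rda.mpr (le_trans (iInf_le _ q) (iInf_le _ x))
    exact le_trans (Quantaloid.comp_le_comp h1 le_rfl) h2

/-- The Yoneda embedding `y_X : X → P X`. -/
def QCat.y (X : QCat Q) : QFun X X.P where
  app p x := ⟨fun q x' => X.hom q p x' x,
    fun p' q' x1 x2 => X.hom_comp_le x1 x2 x⟩
  mono := by
    intro p q x x'
    refine le_iInf fun r => le_iInf fun x'' => Quantaloid.le_lda.mp ?_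
    exact X.hom_comp_le x'' x x'

/-- The co-Yoneda embedding `y†_X : X → P† X`. -/
def QCat.yd (X : QCat Q) : QFun X X.Pd where
  app p x := ⟨fun q x' => X.hom p q x x',
    fun p' q' x1 x2 => X.hom_comp_le x x1 x2⟩
  mono := by
    intro p q x x'
    refine le_iInf fun r => le_iInf fun x'' => Quantaloid.le_rda.mp ?_
    exact X.hom_comp_le x x' x''

/-- `φ^→ : P Y → P X`, `τ ↦ τ ∘ φ`. -/
def QDist.fwd {X Y : QCat Q} (φ : QDist X Y) : QFun Y.P X.P where
  app s τ := ⟨fun p x => ⨆ q, ⨆ y : Y.el q, Q.comp (τ.1 q y) (φ.rel p q x y), by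
    intro p q x x'
    rw [Quantaloid.iSup_comp]
    refine iSup_le fun r => ?_
    rw [Quantaloid.iSup_comp]
    refine iSup_le fun y => ?_
    rw [Q.comp_assoc]
    exact le_iSup_of_le r (le_iSup_of_le y
      (Quantaloid.comp_le_comp le_rfl (φ.rel_comp_hom x x' y)))⟩
  mono := by
    intro s s' τ τ'
    refine le_iInf fun p => le_iInf fun x => Quantaloid.le_lda.mp ?_
    rw [Quantaloid.comp_iSup]
    refine iSup_le fun r => ?_
    rw [Quantaloid.comp_iSup]
    refine iSup_le fun y => ?_
    rw [← Q.comp_assoc]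
    have h : Q.comp (Y.P.hom s s' τ τ') (τ.1 r y) ≤ τ'.1 r y :=
      Quantaloid.le_lda.mpr (le_trans (iInf_le _ r) (iInf_le _ y))
    exact le_iSup_of_le r (le_iSup_of_le y (Quantaloid.comp_le_comp h le_rfl))

/-- `φ^↞ : P† X → P† Y`, `σ ↦ φ ∘ σ`. -/
def QDist.bwd {X Y : QCat Q} (φ : QDist X Y) : QFun X.Pd Y.Pd where
  app s σ := ⟨fun q y => ⨆ p, ⨆ x : X.el p, Q.comp (φ.rel p q x y) (σ.1 p x), by
    intro p q y y'
    rw [Quantaloid.comp_iSup]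
    refine iSup_le fun r => ?_
    rw [Quantaloid.comp_iSup]
    refine iSup_le fun x => ?_
    rw [← Q.comp_assoc]
    exact le_iSup_of_le r (le_iSup_of_le x
      (Quantaloid.comp_le_comp (φ.hom_comp_rel x y y') le_rfl))⟩
  mono := by
    intro s s' σ σ'
    refine le_iInf fun q => le_iInf fun y => Quantaloid.le_rda.mp ?_
    rw [Quantaloid.iSup_comp]
    refine iSup_le fun r => ?_
    rw [Quantaloid.iSup_comp]
    refine iSup_le fun x => ?_
    rw [Q.comp_assoc]
    have h : Q.comp (σ'.1 r x) (X.Pd.hom s s' σ σ') ≤ σ.1 r x :=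
      Quantaloid.le_rda.mpr (le_trans (iInf_le _ r) (iInf_le _ x))
    exact le_iSup_of_le r (le_iSup_of_le x (Quantaloid.comp_le_comp le_rfl h))

/-- `φ_→ : P X → P Y`, `σ ↦ σ ↙ φ`. -/
def QDist.fwdr {X Y : QCat Q} (φ : QDist X Y) : QFun X.P Y.P where
  app s σ := ⟨fun q y => ⨅ p, ⨅ x : X.el p, Quantaloid.lda (σ.1 p x) (φ.rel p q x y), by
    intro q q' y y'
    refine le_iInf fun p => le_iInf fun x => Quantaloid.le_lda.mp ?_
    rw [Q.comp_assoc]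
    have h1 : Q.comp (Y.hom q q' y y') (φ.rel p q x y) ≤ φ.rel p q' x y' :=
      φ.hom_comp_rel x y y'
    have h2 : Q.comp ((⨅ p', ⨅ x' : X.el p',
        Quantaloid.lda (σ.1 p' x') (φ.rel p' q' x' y')) : Q.Hom q' s) (φ.rel p q' x y')
        ≤ σ.1 p x :=
      Quantaloid.le_lda.mpr (le_trans (iInf_le _ p) (iInf_le _ x))
    exact le_trans (Quantaloid.comp_le_comp le_rfl h1) h2⟩
  mono := by
    intro s s' σ σ'
    refine le_iInf fun q => le_iInf fun y => Quantaloid.le_lda.mp ?_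
    refine le_iInf fun p => le_iInf fun x => Quantaloid.le_lda.mp ?_
    rw [Q.comp_assoc]
    have h1 : Q.comp ((⨅ p', ⨅ x' : X.el p',
        Quantaloid.lda (σ.1 p' x') (φ.rel p' q x' y)) : Q.Hom q s) (φ.rel p q x y)
        ≤ σ.1 p x :=
      Quantaloid.le_lda.mpr (le_trans (iInf_le _ p) (iInf_le _ x))
    have h2 : Q.comp (X.P.hom s s' σ σ') (σ.1 p x) ≤ σ'.1 p x :=
      Quantaloid.le_lda.mpr (le_trans (iInf_le _ p) (iInf_le _ x))
    exact le_trans (Quantaloid.comp_le_comp le_rfl h1) h2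

/-- Isbell `φ↑ : P X → P† Y`, `σ ↦ φ ↙ σ`. -/
def QDist.up {X Y : QCat Q} (φ : QDist X Y) : QFun X.P Y.Pd where
  app s σ := ⟨fun q y => ⨅ p, ⨅ x : X.el p, Quantaloid.lda (φ.rel p q x y) (σ.1 p x), by
    intro q q' y y'
    refine le_iInf fun p => le_iInf fun x => Quantaloid.le_lda.mp ?_
    rw [Q.comp_assoc]
    have h1 : Q.comp ((⨅ p', ⨅ x' : X.el p',
        Quantaloid.lda (φ.rel p' q x' y) (σ.1 p' x')) : Q.Hom s q) (σ.1 p x)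
        ≤ φ.rel p q x y :=
      Quantaloid.le_lda.mpr (le_trans (iInf_le _ p) (iInf_le _ x))
    exact le_trans (Quantaloid.comp_le_comp le_rfl h1) (φ.hom_comp_rel x y y')⟩
  mono := by
    intro s s' σ σ'
    refine le_iInf fun q => le_iInf fun y => Quantaloid.le_rda.mp ?_
    refine le_iInf fun p => le_iInf fun x => Quantaloid.le_lda.mp ?_
    rw [Q.comp_assoc]
    have h1 : Q.comp (X.P.hom s s' σ σ') (σ.1 p x) ≤ σ'.1 p x :=
      Quantaloid.le_lda.mpr (le_trans (iInf_le _ p) (iInf_le _ x))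
    have h2 : Q.comp ((⨅ p', ⨅ x' : X.el p',
        Quantaloid.lda (φ.rel p' q x' y) (σ'.1 p' x')) : Q.Hom s' q) (σ'.1 p x)
        ≤ φ.rel p q x y :=
      Quantaloid.le_lda.mpr (le_trans (iInf_le _ p) (iInf_le _ x))
    exact le_trans (Quantaloid.comp_le_comp le_rfl h1) h2

/-- Isbell `φ↓ : P† Y → P X`, `τ ↦ τ ↘ φ`. -/
def QDist.down {X Y : QCat Q} (φ : QDist X Y) : QFun Y.Pd X.P where
  app s τ := ⟨fun p x => ⨅ q, ⨅ y : Y.el q, Quantaloid.rda (τ.1 q y) (φ.rel p q x y), by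
    intro p p' x x'
    refine le_iInf fun q => le_iInf fun y => Quantaloid.le_rda.mp ?_
    rw [← Q.comp_assoc]
    have h1 : Q.comp (τ.1 q y) ((⨅ q', ⨅ y' : Y.el q',
        Quantaloid.rda (τ.1 q' y') (φ.rel p' q' x' y')) : Q.Hom p' s)
        ≤ φ.rel p' q x' y :=
      Quantaloid.le_rda.mpr (le_trans (iInf_le _ q) (iInf_le _ y))
    exact le_trans (Quantaloid.comp_le_comp h1 le_rfl) (φ.rel_comp_hom x x' y)⟩
  mono := by
    intro s s' τ τ'
    refine le_iInf fun p => le_iInf fun x => Quantaloid.le_lda.mp ?_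
    refine le_iInf fun q => le_iInf fun y => Quantaloid.le_rda.mp ?_
    rw [← Q.comp_assoc]
    have h1 : Q.comp (τ'.1 q y) (Y.Pd.hom s s' τ τ') ≤ τ.1 q y :=
      Quantaloid.le_rda.mpr (le_trans (iInf_le _ q) (iInf_le _ y))
    have h2 : Q.comp (τ.1 q y) ((⨅ q', ⨅ y' : Y.el q',
        Quantaloid.rda (τ.1 q' y') (φ.rel p q' x y')) : Q.Hom p s)
        ≤ φ.rel p q x y :=
      Quantaloid.le_rda.mpr (le_trans (iInf_le _ q) (iInf_le _ y))
    exact le_trans (Quantaloid.comp_le_comp h1 le_rfl) h2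

/-- The transpose `←φ : Y → P X` of a distributor `φ : X ⇸ Y`. -/
def QDist.transpose {X Y : QCat Q} (φ : QDist X Y) : QFun Y X.P where
  app q y := ⟨fun p x => φ.rel p q x y,
    fun p q' x x' => φ.rel_comp_hom x x' y⟩
  mono := by
    intro q q' y y'
    refine le_iInf fun p => le_iInf fun x => Quantaloid.le_lda.mp ?_
    exact φ.hom_comp_rel x y y'

/-- The inverse of transposition. -/
def QFun.untranspose {X Y : QCat Q} (g : QFun Y X.P) : QDist X Y :=
  ⟨fun p q x y => (g.app q y).1 p x, by
    intro p q x y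
    simp only [QRel.comp, Quantaloid.comp_iSup, Quantaloid.iSup_comp]
    refine iSup₂_le fun q' y' => iSup₂_le fun p' x' => ?_
    have h1 : Q.comp ((g.app q' y').1 p' x') (X.hom p p' x x') ≤ (g.app q' y').1 p x :=
      (g.app q' y').2 p p' x x'
    have h2 : Q.comp (Y.hom q' q y' y) ((g.app q' y').1 p x) ≤ (g.app q y).1 p x :=
      Quantaloid.le_lda.mpr
        (le_trans (g.mono q' q y' y) (le_trans (iInf_le _ p) (iInf_le _ x)))
    exact le_trans (Quantaloid.comp_le_comp le_rfl h1) h2⟩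

/-- `f_! := (f^*)^→ : P X → P Y`. -/
def pshf {X Y : QCat Q} (f : QFun X Y) : QFun X.P Y.P := f.cograph.fwd

/-- `f^! := (f_*)^→ : P Y → P X`. -/
def pshb {X Y : QCat Q} (f : QFun X Y) : QFun Y.P X.P := f.graph.fwd

/-- `f_† := (f_*)^↞ : P† X → P† Y`. -/
def cpsf {X Y : QCat Q} (f : QFun X Y) : QFun X.Pd Y.Pd := f.graph.bwd

/-- `f^† := (f^*)^↞ : P† Y → P† X`. -/
def cpsb {X Y : QCat Q} (f : QFun X Y) : QFun Y.Pd X.Pd := f.cograph.bwd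

/-- `sup_{P X} = y_X^! : P P X → P X`: the multiplication of the presheaf 2-monad. -/
def supP (X : QCat Q) : QFun X.P.P X.P := pshb X.y

/-- `inf_{P† X} = (y†_X)^† : P† P† X → P† X`: the multiplication of the copresheaf
2-monad. -/
def infPd (X : QCat Q) : QFun X.Pd.Pd X.Pd := cpsb X.yd

/-- Adjunction `f ⊣ g` in `Q`-Cat. -/
def QAdj {X Y : QCat Q} (f : QFun X Y) (g : QFun Y X) : Prop :=
  QFun.id X ≤ g.comp f ∧ f.comp g ≤ QFun.id Y

/-- Fully faithful `Q`-functors. -/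
def QFun.FullyFaithful {X Y : QCat Q} (f : QFun X Y) : Prop :=
  ∀ p q (x : X.el p) (x' : X.el q), X.hom p q x x' = Y.hom p q (f.app p x) (f.app q x')

/-- A `Q`-closure operation on a `Q`-category. -/
def IsClosureOp (Z : QCat Q) (c : QFun Z Z) : Prop :=
  QFun.id Z ≤ c ∧ c.comp c = c

/-- A 2-functor on `Q`-Cat. -/
structure TwoFunctor (Q : Quantaloid.{u}) : Type (u + 1) where
  obj : QCat Q → QCat Q
  map : ∀ {X Y : QCat Q}, QFun X Y → QFun (obj X) (obj Y)
  map_id : ∀ X : QCat Q, map (QFun.id X) = QFun.id (obj X)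
  map_comp : ∀ {X Y Z : QCat Q} (g : QFun Y Z) (f : QFun X Y),
    map (g.comp f) = (map g).comp (map f)
  map_mono : ∀ {X Y : QCat Q} {f g : QFun X Y}, f ≤ g → map f ≤ map g

/-- A 2-monad on `Q`-Cat. -/
structure TwoMonad (Q : Quantaloid.{u}) extends TwoFunctor Q where
  unit : ∀ X : QCat Q, QFun X (obj X)
  mult : ∀ X : QCat Q, QFun (obj (obj X)) (obj X)
  unit_nat : ∀ {X Y : QCat Q} (f : QFun X Y), (unit Y).comp f = (map f).comp (unit X)
  mult_nat : ∀ {X Y : QCat Q} (f : QFun X Y),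
    (mult Y).comp (map (map f)) = (map f).comp (mult X)
  mult_unit : ∀ X : QCat Q, (mult X).comp (unit (obj X)) = QFun.id (obj X)
  mult_map_unit : ∀ X : QCat Q, (mult X).comp (map (unit X)) = QFun.id (obj X)
  mult_assoc : ∀ X : QCat Q, (mult X).comp (map (mult X)) = (mult X).comp (mult (obj X))

/-- The type of families `λ_X : T P X → P T X`. -/
abbrev LamFamily (T : TwoFunctor Q) : Type (u + 1) :=
  ∀ X : QCat Q, QFun (T.obj X.P) ((T.obj X).P)

/-- Lax naturality law (a): `(Tf)_! ∘ λ_X ≤ λ_Y ∘ T(f_!)`. -/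
def LawA (T : TwoFunctor Q) (lam : LamFamily T) : Prop :=
  ∀ (X Y : QCat Q) (f : QFun X Y),
    (pshf (T.map f)).comp (lam X) ≤ (lam Y).comp (T.map (pshf f))

/-- Lax `P`-unit law (b): `y_{TX} ≤ λ_X ∘ T y_X`. -/
def LawB (T : TwoFunctor Q) (lam : LamFamily T) : Prop :=
  ∀ X : QCat Q, QCat.y (T.obj X) ≤ (lam X).comp (T.map X.y)

/-- The `P`-unit law (b) holding strictly (flatness). -/
def LawBstrict (T : TwoFunctor Q) (lam : LamFamily T) : Prop :=
  ∀ X : QCat Q, (lam X).comp (T.map X.y) = QCat.y (T.obj X)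

/-- Lax `P`-multiplication law (c): `s_{TX} ∘ (λ_X)_! ∘ λ_{PX} ≤ λ_X ∘ T s_X`. -/
def LawC (T : TwoFunctor Q) (lam : LamFamily T) : Prop :=
  ∀ X : QCat Q,
    (supP (T.obj X)).comp ((pshf (lam X)).comp (lam X.P)) ≤ (lam X).comp (T.map (supP X))

/-- Lax `T`-unit law (d): `(e_X)_! ≤ λ_X ∘ e_{PX}`. -/
def LawD (M : TwoMonad Q) (lam : LamFamily M.toTwoFunctor) : Prop :=
  ∀ X : QCat Q, pshf (M.unit X) ≤ (lam X).comp (M.unit X.P)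

/-- Lax `T`-multiplication law (e): `(m_X)_! ∘ λ_{TX} ∘ T λ_X ≤ λ_X ∘ m_{PX}`. -/
def LawE (M : TwoMonad Q) (lam : LamFamily M.toTwoFunctor) : Prop :=
  ∀ X : QCat Q,
    (pshf (M.mult X)).comp ((lam (M.obj X)).comp (M.map (lam X))) ≤ (lam X).comp (M.mult X.P)

def IsDistLawABC (T : TwoFunctor Q) (lam : LamFamily T) : Prop :=
  LawA T lam ∧ LawB T lam ∧ LawC T lam

/-- A (lax) distributive law of the 2-monad `M` over the presheaf 2-monad. -/
def IsDistLaw (M : TwoMonad Q) (lam : LamFamily M.toTwoFunctor) : Prop :=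
  IsDistLawABC M.toTwoFunctor lam ∧ LawD M lam ∧ LawE M lam

/-- A flat distributive law: (b) holds strictly. -/
def IsFlatDistLaw (M : TwoMonad Q) (lam : LamFamily M.toTwoFunctor) : Prop :=
  IsDistLaw M lam ∧ LawBstrict M.toTwoFunctor lam

/-- Lax `λ`-algebra: laws (f) and (g). -/
def IsLaxAlg (M : TwoMonad Q) (lam : LamFamily M.toTwoFunctor) (X : QCat Q)
    (p : QFun (M.obj X) X.P) : Prop :=
  X.y ≤ p.comp (M.unit X) ∧
  (supP X).comp ((pshf p).comp ((lam X).comp (M.map p))) ≤ p.comp (M.mult X)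

/-- Lax `λ`-homomorphism: law (h). -/
def IsLaxHom (M : TwoMonad Q) {X Y : QCat Q}
    (p : QFun (M.obj X) X.P) (q : QFun (M.obj Y) Y.P) (f : QFun X Y) : Prop :=
  (pshf f).comp p ≤ q.comp (M.map f)

/-- The type of families `T̂φ : TX ⇸ TY`, one for each `φ : X ⇸ Y`. -/
abbrev ExtFamily (T : TwoFunctor Q) : Type (u + 1) :=
  ∀ ⦃X Y : QCat Q⦄, QDist X Y → QDist (T.obj X) (T.obj Y)

/-- A lax extension of the 2-functor `T` to `Q`-Dist: conditions (1), (2), (3). -/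
def IsLaxExt (T : TwoFunctor Q) (ext : ExtFamily T) : Prop :=
  (∀ (X Y : QCat Q) (φ φ' : QDist X Y), φ ≤ φ' → ext φ ≤ ext φ') ∧
  (∀ (X Y Z : QCat Q) (φ : QDist X Y) (ψ : QDist Y Z), (ext ψ).comp (ext φ) ≤ ext (ψ.comp φ)) ∧
  (∀ (X Y : QCat Q) (f : QFun X Y),
    (T.map f).graph ≤ ext f.graph ∧ (T.map f).cograph ≤ ext f.cograph)

/-- Condition (4): `φ ∘ e_X^* ≤ e_Y^* ∘ T̂φ`. -/
def ExtLaw4 (M : TwoMonad Q) (ext : ExtFamily M.toTwoFunctor) : Prop :=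
  ∀ (X Y : QCat Q) (φ : QDist X Y),
    φ.comp (M.unit X).cograph ≤ ((M.unit Y).cograph).comp (ext φ)

/-- Condition (5): `T̂T̂φ ∘ m_X^* ≤ m_Y^* ∘ T̂φ`. -/
def ExtLaw5 (M : TwoMonad Q) (ext : ExtFamily M.toTwoFunctor) : Prop :=
  ∀ (X Y : QCat Q) (φ : QDist X Y),
    (ext (ext φ)).comp (M.mult X).cograph ≤ ((M.mult Y).cograph).comp (ext φ)

/-- A lax extension of the 2-monad `M` to `Q`-Dist. -/
def IsMonadLaxExt (M : TwoMonad Q) (ext : ExtFamily M.toTwoFunctor) : Prop :=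
  IsLaxExt M.toTwoFunctor ext ∧ ExtLaw4 M ext ∧ ExtLaw5 M ext

/-- Flatness of a lax extension: `T̂ 1_X^* = 1_{TX}^*`. -/
def FlatExt (T : TwoFunctor Q) (ext : ExtFamily T) : Prop :=
  ∀ X : QCat Q, ext X.homDist = (T.obj X).homDist

/-- From a lax distributive law to a lax extension: `←(T̂φ) = λ_X ∘ T(←φ)`. -/
def PhiExt (T : TwoFunctor Q) (lam : LamFamily T) : ExtFamily T :=
  fun X Y φ => QFun.untranspose ((lam X).comp (T.map φ.transpose))

/-- From a lax extension to a lax distributive law: `λ_X = ←(T̂((y_X)_*))`. -/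
def PsiLam (T : TwoFunctor Q) (ext : ExtFamily T) : LamFamily T :=
  fun X => (ext X.y.graph).transpose

/-- The canonical lax extension `T̂φ = (T ←φ)^* ∘ (T y_X)_*`. -/
def hatExt (T : TwoFunctor Q) : ExtFamily T :=
  fun X Y φ => ((T.map φ.transpose).cograph).comp (T.map X.y).graph

/-- `λ_X = y_{PX} ∘ sup_{PX}`: the flat distributive law of `P` over itself. -/
def lamP (X : QCat Q) : QFun X.P.P X.P.P := (QCat.y X.P).comp (supP X)

/-- `λ†_X = ((y_X)_†)^! ∘ y_{P†PX}`: the strict distributive law of `P†` over `P`. -/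
def lamd (X : QCat Q) : QFun X.P.Pd X.Pd.P := (pshb (cpsf X.y)).comp (QCat.y X.P.Pd)

/-- `Λ_X = y_{PP†X} ∘ ((y_X)_†)^!`: the flat distributive law of `P P†` over `P`. -/
def LamPPd (X : QCat Q) : QFun X.P.Pd.P X.Pd.P.P := (QCat.y X.Pd.P).comp (pshb (cpsf X.y))

/-- The multiplication `S_X = s_{P†X} ∘ (y†_{PP†X})^!` of the double presheaf 2-monad. -/
def Smult (X : QCat Q) : QFun X.Pd.P.Pd.P X.Pd.P := (supP X.Pd).comp (pshb (QCat.yd X.Pd.P))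

/-- `Λ†_X = (y_X^!)^{†!} ∘ y_{P†PPX}`: the flat distributive law of `P† P` over `P`. -/
def LamPdP (X : QCat Q) : QFun X.P.P.Pd X.P.Pd.P :=
  (pshf (cpsf (supP X))).comp (QCat.y X.P.P.Pd)

/-- The multiplication `S†_X = s†_{PX} ∘ (y_{P†PX})^†` of the double copresheaf
2-monad. -/
def Sdmult (X : QCat Q) : QFun X.P.Pd.P.Pd X.P.Pd := (infPd X.P).comp (cpsb (QCat.y X.P.Pd))

/-- Pointwise infimum of a family of `Q`-functors into a presheaf `Q`-category. -/
def QFun.iInfP {ι : Type u} {Z X : QCat Q} (F : ι → QFun Z X.P) : QFun Z X.P where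
  app s z := ⟨fun p x => ⨅ i, ((F i).app s z).1 p x, by
    intro p q x x'
    refine le_iInf fun i => ?_
    exact le_trans
      (Quantaloid.comp_le_comp (iInf_le (fun i => ((F i).app s z).1 q x') i) le_rfl)
      (((F i).app s z).2 p q x x')⟩
  mono := by
    intro s s' z z'
    refine le_iInf fun p => le_iInf fun x => Quantaloid.le_lda.mp ?_
    refine le_iInf fun i => ?_
    have h1 : Q.comp (Z.hom s s' z z') (⨅ j, ((F j).app s z).1 p x)
        ≤ Q.comp (Z.hom s s' z z') (((F i).app s z).1 p x) :=
      Quantaloid.comp_le_comp le_rfl (iInf_le _ i)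
    have h2 : Q.comp (Z.hom s s' z z') (((F i).app s z).1 p x)
        ≤ ((F i).app s' z').1 p x :=
      Quantaloid.le_lda.mpr
        (le_trans ((F i).mono s s' z z') (le_trans (iInf_le _ p) (iInf_le _ x)))
    exact le_trans h1 h2

/-- The distributor `X ⇸ PX` associated with a `Q`-functor `c : PX → PX`, given by
`φ(x,σ) = (c σ)(x)`; for a `Q`-closure operation `c` on `PX` this realises the
correspondence `c = ←φ` of Theorem `PdP_Alg`. -/
def clsDist (X : QCat Q) (c : QFun X.P X.P) : QDist X X.P :=
  ⟨fun p q x σ => (c.app q σ).1 p x, by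
    intro p q x σ
    simp only [QRel.comp, Quantaloid.comp_iSup, Quantaloid.iSup_comp]
    refine iSup₂_le fun q' σ' => iSup₂_le fun p' x' => ?_
    have h1 : Q.comp ((c.app q' σ').1 p' x') (X.hom p p' x x') ≤ (c.app q' σ').1 p x :=
      (c.app q' σ').2 p p' x x'
    have h2 : Q.comp (X.P.hom q' q σ' σ) ((c.app q' σ').1 p x) ≤ (c.app q σ).1 p x :=
      Quantaloid.le_lda.mpr
        (le_trans (c.mono q' q σ' σ) (le_trans (iInf_le _ p) (iInf_le _ x)))
    exact le_trans (Quantaloid.comp_le_comp le_rfl h1) h2⟩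

/-- The lax `Λ†`-algebra structure `p = φ↓ : P†PX → PX` associated with a
`Q`-closure structure `c` on `X`. -/
def clsAlg (X : QCat Q) (c : QFun X.P X.P) : QFun X.P.Pd X.P := (clsDist X c).down

/-- Laws (f) and (g) of a lax `Λ†`-algebra, for the double copresheaf 2-monad `𝔓†𝔓`
with its flat distributive law `Λ†` over `𝔓`. -/
def IsAlgPdP (X : QCat Q) (p : QFun X.P.Pd X.P) : Prop :=
  X.y ≤ p.comp ((QCat.yd X.P).comp X.y) ∧
  (supP X).comp ((pshf p).comp ((LamPdP X).comp (cpsf (pshf p)))) ≤ p.comp (Sdmult X)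

/-!
A lax `Λ†`-algebra `p` is determined by the operation `c = p ∘ y†` on `PX` through
`(p τ)(x) = ⋀_σ τ(σ) ↘ (c σ)(x)`, i.e. `p = clsAlg X c`. Law (f) makes `c` extensive. Since `Λ†`
is flat, law (g) collapses to `p ∘ (sup ∘ p_!)_† ≤ p ∘ S†`, and as `sup ∘ p_! ∘ y ∘ y† = c`,
evaluating it on `(y ∘ y†)_† τ` gives `c ∘ clsAlg X c ≤ p`; with extensivity and the general
`p ≤ clsAlg X c` this yields `p = clsAlg X c` and idempotency of `c`. Conversely, for a closure
operation `c` the same collapse verifies (g). Continuity transfers along `y†`, since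
`g_† ∘ y† = y† ∘ g`.
-/

namespace Quantaloid

theorem le_comp_of_idm_le_left {a b : Q.Obj} {v : Q.Hom b b} (h : Q.idm b ≤ v) (u : Q.Hom a b) :
    u ≤ Q.comp v u :=
  (Q.idm_comp u).symm.le.trans (comp_le_comp h le_rfl)

theorem le_comp_of_idm_le_right {a b : Q.Obj} {u : Q.Hom a a} (h : Q.idm a ≤ u) (v : Q.Hom a b) :
    v ≤ Q.comp v u :=
  (Q.comp_idm v).symm.le.trans (comp_le_comp le_rfl h)

end Quantaloid

namespace QCat

variable {X : QCat Q}

theorem hom_le_hom_of_idm_le_right {p q : Q.Obj} {x : X.el p} {y y' : X.el q}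
    (h : Q.idm q ≤ X.hom q q y y') : X.hom p q x y ≤ X.hom p q x y' :=
  (Quantaloid.le_comp_of_idm_le_left h _).trans (X.hom_comp_le x y y')

theorem P_ext {s : Q.Obj} {σ σ' : X.P.el s} (h : ∀ p (x : X.el p), σ.1 p x = σ'.1 p x) :
    σ = σ' :=
  Subtype.ext (funext fun p => funext (h p))

theorem Pd_ext {s : Q.Obj} {τ τ' : X.Pd.el s} (h : ∀ q (x : X.el q), τ.1 q x = τ'.1 q x) :
    τ = τ' :=
  Subtype.ext (funext fun q => funext (h q))

theorem le_P_hom_iff {s s' : Q.Obj} {σ : X.P.el s} {σ' : X.P.el s'} {v : Q.Hom s s'} :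
    v ≤ X.P.hom s s' σ σ' ↔ ∀ p (x : X.el p), Q.comp v (σ.1 p x) ≤ σ'.1 p x := by
  simp only [QCat.P, le_iInf_iff, Quantaloid.le_lda]

theorem le_Pd_hom_iff {s s' : Q.Obj} {τ : X.Pd.el s} {τ' : X.Pd.el s'} {v : Q.Hom s s'} :
    v ≤ X.Pd.hom s s' τ τ' ↔ ∀ q (x : X.el q), Q.comp (τ'.1 q x) v ≤ τ.1 q x := by
  simp only [QCat.Pd, le_iInf_iff, Quantaloid.le_rda]

theorem idm_le_P_hom_iff {s : Q.Obj} {σ σ' : X.P.el s} :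
    Q.idm s ≤ X.P.hom s s σ σ' ↔ ∀ p (x : X.el p), σ.1 p x ≤ σ'.1 p x := by
  simp only [le_P_hom_iff, Q.idm_comp]

theorem idm_le_Pd_hom_iff {s : Q.Obj} {τ τ' : X.Pd.el s} :
    Q.idm s ≤ X.Pd.hom s s τ τ' ↔ ∀ q (x : X.el q), τ'.1 q x ≤ τ.1 q x := by
  simp only [le_Pd_hom_iff, Q.comp_idm]

theorem P_hom_comp_le {s s' : Q.Obj} (σ : X.P.el s) (σ' : X.P.el s') {p : Q.Obj} (x : X.el p) :
    Q.comp (X.P.hom s s' σ σ') (σ.1 p x) ≤ σ'.1 p x :=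
  le_P_hom_iff.mp le_rfl p x

theorem P_hom_y {p s : Q.Obj} (x : X.el p) (σ : X.P.el s) :
    X.P.hom p s (X.y.app p x) σ = σ.1 p x :=
  le_antisymm
    ((Quantaloid.le_comp_of_idm_le_right (X.refl p x) _).trans (P_hom_comp_le _ σ x))
    (le_P_hom_iff.mpr fun _ x' => σ.2 _ p x' x)

theorem Pd_hom_yd {s q : Q.Obj} (τ : X.Pd.el s) (z : X.el q) :
    X.Pd.hom s q τ (X.yd.app q z) = τ.1 q z :=
  le_antisymm
    ((Quantaloid.le_comp_of_idm_le_left (X.refl q z) _).trans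
      (le_Pd_hom_iff.mp (le_refl (X.Pd.hom s q τ (X.yd.app q z))) q z))
    (le_Pd_hom_iff.mpr fun _ z' => τ.2 q _ z z')

end QCat

namespace QFun

variable {X Y Z W : QCat Q}

theorem ext {f g : QFun X Y} (h : ∀ p x, f.app p x = g.app p x) : f = g := by
  cases f; cases g
  congr
  funext p x
  exact h p x

theorem comp_assoc (h : QFun Z W) (g : QFun Y Z) (f : QFun X Y) :
    (h.comp g).comp f = h.comp (g.comp f) := rfl

theorem id_comp (f : QFun X Y) : (QFun.id Y).comp f = f := rfl

theorem comp_le_comp {g g' : QFun Y Z} {f f' : QFun X Y} (hg : g ≤ g') (hf : f ≤ f') :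
    g.comp f ≤ g'.comp f' :=
  le_trans (b := g'.comp f) (fun p x => hg p (f.app p x))
    fun p x => (hf p x).trans (g'.mono _ _ _ _)

theorem le_iff_P {f g : QFun Z X.P} :
    f ≤ g ↔ ∀ s (z : Z.el s) p (x : X.el p), ((f.app s z).1 p x) ≤ (g.app s z).1 p x :=
  forall₂_congr fun _ _ => QCat.idm_le_P_hom_iff

theorem eq_of_le_P {f g : QFun Z X.P} (h : f ≤ g) (h' : g ≤ f) : f = g :=
  ext fun s z => QCat.P_ext fun p x =>
    le_antisymm (le_iff_P.mp h s z p x) (le_iff_P.mp h' s z p x)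

end QFun

section Transport

variable {X Y Z : QCat Q}

theorem cpsf_app (f : QFun X Y) {s : Q.Obj} (τ : X.Pd.el s) {q : Q.Obj} (y : Y.el q) :
    ((cpsf f).app s τ).1 q y = ⨆ p, ⨆ x : X.el p, Q.comp (Y.hom p q (f.app p x) y) (τ.1 p x) :=
  rfl

theorem pshb_app (f : QFun X Y) {s : Q.Obj} (σ : Y.P.el s) {p : Q.Obj} (x : X.el p) :
    ((pshb f).app s σ).1 p x = σ.1 p (f.app p x) :=
  le_antisymm (iSup₂_le fun q y => σ.2 p q (f.app p x) y)
    (le_iSup₂_of_le p (f.app p x) (Quantaloid.le_comp_of_idm_le_right (Y.refl p _) _))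

theorem cpsb_app (f : QFun X Y) {s : Q.Obj} (τ : Y.Pd.el s) {q : Q.Obj} (x : X.el q) :
    ((cpsb f).app s τ).1 q x = τ.1 q (f.app q x) :=
  le_antisymm (iSup₂_le fun p y => τ.2 p q y (f.app q x))
    (le_iSup₂_of_le q (f.app q x) (Quantaloid.le_comp_of_idm_le_left (Y.refl q _) _))

theorem le_cpsf_app (f : QFun X Y) {s : Q.Obj} (τ : X.Pd.el s) {q : Q.Obj} (x : X.el q) :
    τ.1 q x ≤ ((cpsf f).app s τ).1 q (f.app q x) :=
  le_iSup₂_of_le q x (Quantaloid.le_comp_of_idm_le_left (Y.refl q _) _)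

theorem pshf_comp_y (f : QFun X Y) : (pshf f).comp X.y = Y.y.comp f := by
  refine QFun.ext fun s x => QCat.P_ext fun q y => le_antisymm ?_ ?_
  · refine iSup₂_le fun p x' => ?_
    exact (Quantaloid.comp_le_comp (f.mono p s x' x) le_rfl).trans (Y.hom_comp_le _ _ _)
  · exact le_iSup₂_of_le s x (Quantaloid.le_comp_of_idm_le_left (X.refl s x) _)

theorem cpsf_comp_yd (f : QFun X Y) : (cpsf f).comp X.yd = Y.yd.comp f := by
  refine QFun.ext fun s x => QCat.Pd_ext fun q y => le_antisymm ?_ ?_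
  · refine iSup₂_le fun p x' => ?_
    exact (Quantaloid.comp_le_comp le_rfl (f.mono s p x x')).trans (Y.hom_comp_le _ _ _)
  · exact le_iSup₂_of_le s x (Quantaloid.le_comp_of_idm_le_right (X.refl s x) _)

theorem cpsf_comp (g : QFun Y Z) (f : QFun X Y) : cpsf (g.comp f) = (cpsf g).comp (cpsf f) := by
  refine QFun.ext fun s τ => QCat.Pd_ext fun r z => le_antisymm ?_ ?_
  · exact iSup₂_le fun p x =>
      le_iSup₂_of_le p (f.app p x) (Quantaloid.comp_le_comp le_rfl (le_cpsf_app f τ x))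
  · refine iSup₂_le fun q y => ?_
    simp only [cpsf_app, Quantaloid.comp_iSup, ← Q.comp_assoc]
    refine iSup₂_le fun p x => le_iSup₂_of_le p x (Quantaloid.comp_le_comp ?_ le_rfl)
    exact (Quantaloid.comp_le_comp le_rfl (g.mono p q _ y)).trans (Z.hom_comp_le _ _ _)

end Transport

section DoubleCopresheaf

variable {X Z : QCat Q}

theorem supP_app {s : Q.Obj} (S : X.P.P.el s) {p : Q.Obj} (x : X.el p) :
    ((supP X).app s S).1 p x = S.1 p (X.y.app p x) :=
  pshb_app X.y S x

theorem supP_comp_y : (supP X).comp X.P.y = QFun.id X.P :=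
  QFun.ext fun _ σ => QCat.P_ext fun _ x => (supP_app _ x).trans (QCat.P_hom_y x σ)

theorem supP_comp_pshf_comp_y (p : QFun Z X.P) : ((supP X).comp (pshf p)).comp Z.y = p := by
  rw [QFun.comp_assoc, pshf_comp_y, ← QFun.comp_assoc, supP_comp_y, QFun.id_comp]

theorem Sdmult_app {s : Q.Obj} (Θ : X.P.Pd.P.Pd.el s) {q : Q.Obj} (σ : X.P.el q) :
    ((Sdmult X).app s Θ).1 q σ = Θ.1 q ((QCat.y X.P.Pd).app q ((QCat.yd X.P).app q σ)) :=
  (cpsb_app _ _ _).trans (cpsb_app _ _ _)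

theorem Sdmult_comp_cpsf_y_comp_yd_le :
    (Sdmult X).comp (cpsf ((QCat.y X.P.Pd).comp (QCat.yd X.P))) ≤ QFun.id X.P.Pd :=
  fun s τ => QCat.idm_le_Pd_hom_iff.mpr fun _ σ =>
    (le_cpsf_app ((QCat.y X.P.Pd).comp (QCat.yd X.P)) τ σ).trans
      (Sdmult_app ((cpsf ((QCat.y X.P.Pd).comp (QCat.yd X.P))).app s τ) σ).ge

theorem LamPdP_eq : LamPdP X = (QCat.y X.P.Pd).comp (cpsf (supP X)) :=
  pshf_comp_y _

theorem supP_comp_pshf_comp_LamPdP (p : QFun X.P.Pd X.P) :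
    (supP X).comp ((pshf p).comp ((LamPdP X).comp (cpsf (pshf p)))) =
      p.comp (cpsf ((supP X).comp (pshf p))) := by
  rw [LamPdP_eq, cpsf_comp]
  exact congrArg (fun g => g.comp ((cpsf (supP X)).comp (cpsf (pshf p))))
    (supP_comp_pshf_comp_y p)

end DoubleCopresheaf

section Closure

variable {X Y : QCat Q}

theorem id_le_of_y_le_comp_y {c : QFun X.P X.P} (h : X.y ≤ c.comp X.y) : QFun.id X.P ≤ c := by
  refine fun s σ => QCat.idm_le_P_hom_iff.mpr fun p x => ?_
  have hx : Q.idm p ≤ (c.app p (X.y.app p x)).1 p x :=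
    (X.refl p x).trans (QCat.idm_le_P_hom_iff.mp (h p x) p x)
  calc σ.1 p x = X.P.hom p s (X.y.app p x) σ := (QCat.P_hom_y x σ).symm
    _ ≤ X.P.hom p s (c.app p (X.y.app p x)) (c.app s σ) := c.mono _ _ _ _
    _ ≤ Q.comp (X.P.hom p s (c.app p (X.y.app p x)) (c.app s σ)) ((c.app p (X.y.app p x)).1 p x) :=
      Quantaloid.le_comp_of_idm_le_right hx _
    _ ≤ (c.app s σ).1 p x := QCat.P_hom_comp_le _ _ x

theorem le_clsAlg_iff {c : QFun X.P X.P} {s : Q.Obj} {σ : X.P.el s} {τ : X.P.Pd.el s} :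
    (∀ p (x : X.el p), σ.1 p x ≤ ((clsAlg X c).app s τ).1 p x) ↔
      ∀ q (ρ : X.P.el q), τ.1 q ρ ≤ X.P.hom s q σ (c.app q ρ) := by
  simp only [QCat.le_P_hom_iff, clsAlg, QDist.down, clsDist, le_iInf_iff, ← Quantaloid.le_rda]
  exact ⟨fun h q ρ p x => h p x q ρ, fun h p x q ρ => h q ρ p x⟩

theorem clsAlg_spec (c : QFun X.P X.P) {s : Q.Obj} (τ : X.P.Pd.el s) {q : Q.Obj} (ρ : X.P.el q) :
    τ.1 q ρ ≤ X.P.hom s q ((clsAlg X c).app s τ) (c.app q ρ) :=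
  le_clsAlg_iff.mp (fun _ _ => le_rfl) q ρ

theorem clsAlg_comp_yd (c : QFun X.P X.P) : (clsAlg X c).comp (QCat.yd X.P) = c :=
  QFun.eq_of_le_P (fun s σ => (X.P.refl s σ).trans (clsAlg_spec c ((QCat.yd X.P).app s σ) σ))
    fun s σ => QCat.idm_le_P_hom_iff.mpr (le_clsAlg_iff.mpr fun q ρ => c.mono s q σ ρ)

theorem yd_comp_clsAlg_le_cpsf (c : QFun X.P X.P) :
    (QCat.yd X.P).comp (clsAlg X c) ≤ cpsf c := by
  refine fun _ τ => QCat.idm_le_Pd_hom_iff.mpr fun _ _ => iSup₂_le fun _ σ => ?_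
  exact (Quantaloid.comp_le_comp le_rfl (clsAlg_spec c τ σ)).trans (X.P.hom_comp_le _ _ _)

theorem le_clsAlg_comp_yd (p : QFun X.P.Pd X.P) : p ≤ clsAlg X (p.comp (QCat.yd X.P)) :=
  fun _ τ => QCat.idm_le_P_hom_iff.mpr <| le_clsAlg_iff.mpr fun _ σ =>
    (QCat.Pd_hom_yd τ σ).ge.trans (p.mono _ _ _ _)

theorem comp_clsAlg_le_iff (g : QFun X.P Y.P) {c : QFun X.P X.P} {d : QFun Y.P Y.P} :
    g.comp (clsAlg X c) ≤ (clsAlg Y d).comp (cpsf g) ↔ g.comp c ≤ d.comp g := by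
  constructor
  · intro H
    calc g.comp c = (g.comp (clsAlg X c)).comp (QCat.yd X.P) := by
          rw [QFun.comp_assoc, clsAlg_comp_yd]
      _ ≤ ((clsAlg Y d).comp (cpsf g)).comp (QCat.yd X.P) := QFun.comp_le_comp H le_rfl
      _ = d.comp g := by rw [QFun.comp_assoc, cpsf_comp_yd, ← QFun.comp_assoc, clsAlg_comp_yd]
  · intro K s τ
    refine QCat.idm_le_P_hom_iff.mpr <| le_clsAlg_iff.mpr fun r ρ => iSup₂_le fun q σ => ?_
    have hσ : τ.1 q σ ≤ Y.P.hom s q (g.app s ((clsAlg X c).app s τ)) (d.app q (g.app q σ)) :=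
      ((clsAlg_spec c τ σ).trans (g.mono _ _ _ _)).trans (QCat.hom_le_hom_of_idm_le_right (K q σ))
    exact (Quantaloid.comp_le_comp (d.mono _ _ _ _) hσ).trans (Y.P.hom_comp_le _ _ _)

theorem IsClosureOp.isAlgPdP_clsAlg {c : QFun X.P X.P} (hc : IsClosureOp X.P c) :
    IsAlgPdP X (clsAlg X c) := by
  constructor
  · rw [← QFun.comp_assoc, clsAlg_comp_yd]
    exact QFun.comp_le_comp hc.1 le_rfl
  · rw [supP_comp_pshf_comp_LamPdP]
    set F := (supP X).comp (pshf (clsAlg X c))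
    refine fun s Θ => QCat.idm_le_P_hom_iff.mpr <| le_clsAlg_iff.mpr fun q ρ => ?_
    have hF : F.app q ((QCat.y X.P.Pd).app q ((QCat.yd X.P).app q ρ)) = c.app q ρ := by
      rw [← clsAlg_comp_yd c, ← supP_comp_pshf_comp_y (clsAlg X c)]
      rfl
    calc ((Sdmult X).app s Θ).1 q ρ
        ≤ ((cpsf F).app s Θ).1 q (c.app q ρ) := (Sdmult_app Θ ρ).le.trans (hF ▸ le_cpsf_app F Θ _)
      _ ≤ X.P.hom s q ((clsAlg X c).app s ((cpsf F).app s Θ)) (c.app q (c.app q ρ)) :=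
        clsAlg_spec c _ _
      _ = X.P.hom s q ((clsAlg X c).app s ((cpsf F).app s Θ)) (c.app q ρ) := by
        rw [show c.app q (c.app q ρ) = c.app q ρ from congrArg (·.app q ρ) hc.2]

theorem IsAlgPdP.comp_clsAlg_le {p : QFun X.P.Pd X.P} (hp : IsAlgPdP X p) :
    (p.comp (QCat.yd X.P)).comp (clsAlg X (p.comp (QCat.yd X.P))) ≤ p := by
  set c := p.comp (QCat.yd X.P)
  set F := (supP X).comp (pshf p)
  have hg : p.comp (cpsf F) ≤ p.comp (Sdmult X) := supP_comp_pshf_comp_LamPdP p ▸ hp.2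
  have hc : c = F.comp ((QCat.y X.P.Pd).comp (QCat.yd X.P)) := by
    rw [← QFun.comp_assoc, supP_comp_pshf_comp_y]
  calc c.comp (clsAlg X c) = p.comp ((QCat.yd X.P).comp (clsAlg X c)) := rfl
    _ ≤ p.comp (cpsf c) := QFun.comp_le_comp le_rfl (yd_comp_clsAlg_le_cpsf c)
    _ = (p.comp (cpsf F)).comp (cpsf ((QCat.y X.P.Pd).comp (QCat.yd X.P))) := by
      rw [hc, cpsf_comp]; rfl
    _ ≤ p.comp ((Sdmult X).comp (cpsf ((QCat.y X.P.Pd).comp (QCat.yd X.P)))) :=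
      QFun.comp_le_comp hg le_rfl
    _ ≤ p.comp (QFun.id X.P.Pd) := QFun.comp_le_comp le_rfl Sdmult_comp_cpsf_y_comp_yd_le

theorem IsAlgPdP.existsUnique_clsAlg_eq {p : QFun X.P.Pd X.P} (hp : IsAlgPdP X p) :
    ∃! c : QFun X.P X.P, IsClosureOp X.P c ∧ clsAlg X c = p := by
  set c := p.comp (QCat.yd X.P)
  have hext : QFun.id X.P ≤ c := id_le_of_y_le_comp_y hp.1
  have hle : c.comp (clsAlg X c) ≤ p := hp.comp_clsAlg_le
  have hidem : c.comp c = c := by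
    refine QFun.eq_of_le_P ?_ (QFun.comp_le_comp hext le_rfl)
    calc c.comp c = (c.comp (clsAlg X c)).comp (QCat.yd X.P) := by
          rw [QFun.comp_assoc c, clsAlg_comp_yd]
      _ ≤ c := QFun.comp_le_comp hle le_rfl
  refine ⟨c, ⟨⟨hext, hidem⟩, ?_⟩, fun c' ⟨_, hc'⟩ => ?_⟩
  · exact QFun.eq_of_le_P ((QFun.comp_le_comp hext le_rfl).trans hle) (le_clsAlg_comp_yd p)
  · rw [← clsAlg_comp_yd c', hc']

end Closure

/-- for the flat distributive law `Λ†` of `𝔓†𝔓` over `𝔓`,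
`(Λ†,Q)-Alg ≅ Q-Cls`: lax `Λ†`-algebra structures `p : P†PX → PX` correspond
bijectively to `Q`-closure operations on `PX`, and lax `Λ†`-homomorphisms are
exactly the continuous `Q`-functors of `Q`-closure spaces. -/
theorem statement13 (Q : Quantaloid.{u}) :
    (∀ (X : QCat Q) (c : QFun X.P X.P), IsClosureOp X.P c → IsAlgPdP X (clsAlg X c)) ∧
    (∀ (X : QCat Q) (p : QFun X.P.Pd X.P), IsAlgPdP X p →
      ∃! c : QFun X.P X.P, IsClosureOp X.P c ∧ clsAlg X c = p) ∧
    (∀ (X Y : QCat Q) (c : QFun X.P X.P) (d : QFun Y.P Y.P) (f : QFun X Y),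
      IsClosureOp X.P c → IsClosureOp Y.P d →
      ((pshf f).comp (clsAlg X c) ≤ (clsAlg Y d).comp (cpsf (pshf f)) ↔
        (pshf f).comp c ≤ d.comp (pshf f))) :=
  ⟨fun _ _ hc => hc.isAlgPdP_clsAlg, fun _ _ hp => hp.existsUnique_clsAlg_eq,
    fun _ _ _ _ f _ _ => comp_clsAlg_le_iff (pshf f)⟩

end QT
end

section
/- Let T be a 2-functor on Q-Cat and let (T̂φ:TX⇸TY)_{φ:X⇸Y} be a family of Q-distributors satisfying (1) φ ≤ φ' implies T̂φ ≤ T̂φ' and (2) T̂ψ∘T̂φ ≤ T̂(ψ∘φ). Then the following conditions, quantified over all Q-functors f:X→Y and all Q-distributors φ:Z⇸Y, ψ:Y⇸Z, are equivalent: (i) 1_{TX}^* ≤ T̂(1_X^*) and T̂(f^*∘φ) = (Tf)^*∘T̂φ; (ii) 1_{TX}^* ≤ T̂(1_X^*) and T̂(ψ∘f_*) = T̂ψ∘(Tf)_*; (iii) (Tf)_* ≤ T̂(f_*) and (Tf)^* ≤ T̂(f^*). -/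
/-!
Common framework: quantaloids, `Q`-categories, `Q`-functors, `Q`-distributors,
(co)presheaf constructions, 2-monads on `Q`-Cat, lax distributive laws over the
presheaf 2-monad, and lax extensions to `Q`-Dist.
-/

set_option autoImplicit false

universe u

namespace QT

variable {Q : Quantaloid.{u}}

/-!
In `Q`-Dist every `Q`-functor `f` gives an adjunction `f_* ⊣ f^*`, and so does `Tf`. Under
these adjunctions the equations in (i) and (ii) are mates of the inequalities in (iii):
for instance `(Tf)_* ≤ T̂ f_*` transposes to `1_{TX}^* ≤ (Tf)^* ∘ T̂ f_* = T̂ (f^* ∘ f_*)`,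
which holds as soon as `1_{TX}^* ≤ T̂ 1_X^*`. Conversely, (iii) together with lax functoriality
gives `T̂ (f^* ∘ φ) ≤ (Tf)^* ∘ T̂ φ` by transposing `(Tf)_* ∘ T̂ (f^* ∘ φ) ≤ T̂ (f_* ∘ f^* ∘ φ)`.
-/

namespace QDist

theorem comp_mono {X Y Z : QCat Q} {ψ ψ' : QDist Y Z} {φ φ' : QDist X Y}
    (hψ : ψ ≤ ψ') (hφ : φ ≤ φ') : ψ.comp φ ≤ ψ'.comp φ' :=
  QRel.comp_mono hψ hφ

theorem comp_assoc {W X Y Z : QCat Q} (χ : QDist Y Z) (ψ : QDist X Y) (φ : QDist W X) :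
    (χ.comp ψ).comp φ = χ.comp (ψ.comp φ) :=
  le_antisymm (QRel.comp_assoc _ _ _).le (QRel.comp_assoc _ _ _).ge

@[simp]
theorem comp_homDist {X Y : QCat Q} (φ : QDist X Y) : φ.comp X.homDist = φ :=
  le_antisymm φ.comp_hom_le (QRel.le_comp_hom φ.rel)

@[simp]
theorem homDist_comp {X Y : QCat Q} (φ : QDist X Y) : Y.homDist.comp φ = φ :=
  le_antisymm φ.hom_comp_le (QRel.le_hom_comp φ.rel)

end QDist

namespace QFun

theorem homDist_le_cograph_comp_graph {X Y : QCat Q} (f : QFun X Y) :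
    X.homDist ≤ f.cograph.comp f.graph := by
  intro p q x x'
  calc X.hom p q x x'
      ≤ Y.hom p q (f.app p x) (f.app q x') := f.mono _ _ _ _
    _ = Q.comp (Y.hom p q (f.app p x) (f.app q x')) (Q.idm p) := (Q.comp_idm _).symm
    _ ≤ Q.comp (Y.hom p q (f.app p x) (f.app q x')) (Y.hom p p (f.app p x) (f.app p x)) :=
        Quantaloid.comp_le_comp le_rfl (Y.refl p _)
    _ ≤ (f.cograph.comp f.graph).rel p q x x' := le_iSup₂_of_le p (f.app p x) le_rfl

theorem graph_comp_cograph_le {X Y : QCat Q} (f : QFun X Y) :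
    f.graph.comp f.cograph ≤ Y.homDist :=
  fun _ _ y y' => iSup₂_le fun _ x => Y.hom_comp_le y (f.app _ x) y'

theorem graph_comp_le_iff {X Y Z : QCat Q} (f : QFun X Y) {φ : QDist Z X} {ψ : QDist Z Y} :
    f.graph.comp φ ≤ ψ ↔ φ ≤ f.cograph.comp ψ := by
  constructor
  · intro h
    calc φ = X.homDist.comp φ := φ.homDist_comp.symm
      _ ≤ (f.cograph.comp f.graph).comp φ :=
          QDist.comp_mono f.homDist_le_cograph_comp_graph le_rfl
      _ = f.cograph.comp (f.graph.comp φ) := QDist.comp_assoc _ _ _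
      _ ≤ f.cograph.comp ψ := QDist.comp_mono le_rfl h
  · intro h
    calc f.graph.comp φ ≤ f.graph.comp (f.cograph.comp ψ) := QDist.comp_mono le_rfl h
      _ = (f.graph.comp f.cograph).comp ψ := (QDist.comp_assoc _ _ _).symm
      _ ≤ Y.homDist.comp ψ := QDist.comp_mono f.graph_comp_cograph_le le_rfl
      _ = ψ := ψ.homDist_comp

theorem comp_cograph_le_iff {X Y Z : QCat Q} (f : QFun X Y) {φ : QDist X Z} {ψ : QDist Y Z} :
    φ.comp f.cograph ≤ ψ ↔ φ ≤ ψ.comp f.graph := by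
  constructor
  · intro h
    calc φ = φ.comp X.homDist := φ.comp_homDist.symm
      _ ≤ φ.comp (f.cograph.comp f.graph) :=
          QDist.comp_mono le_rfl f.homDist_le_cograph_comp_graph
      _ = (φ.comp f.cograph).comp f.graph := (QDist.comp_assoc _ _ _).symm
      _ ≤ ψ.comp f.graph := QDist.comp_mono h le_rfl
  · intro h
    calc φ.comp f.cograph ≤ (ψ.comp f.graph).comp f.cograph := QDist.comp_mono h le_rfl
      _ = ψ.comp (f.graph.comp f.cograph) := QDist.comp_assoc _ _ _
      _ ≤ ψ.comp Y.homDist := QDist.comp_mono le_rfl f.graph_comp_cograph_le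
      _ = ψ := ψ.comp_homDist

@[simp]
theorem id_graph (X : QCat Q) : (QFun.id X).graph = X.homDist :=
  rfl

end QFun

namespace ExtFamily

variable {T : TwoFunctor Q}

def IsMonotone (ext : ExtFamily T) : Prop :=
  ∀ (X Y : QCat Q) (φ φ' : QDist X Y), φ ≤ φ' → ext φ ≤ ext φ'

def IsLaxFunctorial (ext : ExtFamily T) : Prop :=
  ∀ (X Y Z : QCat Q) (φ : QDist X Y) (ψ : QDist Y Z), (ext ψ).comp (ext φ) ≤ ext (ψ.comp φ)

def IsLaxUnital (ext : ExtFamily T) : Prop :=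
  ∀ X : QCat Q, (T.obj X).homDist ≤ ext X.homDist

def CommutesWithCographs (ext : ExtFamily T) : Prop :=
  ∀ (X Y Z : QCat Q) (f : QFun X Y) (φ : QDist Z Y),
    ext (f.cograph.comp φ) = (T.map f).cograph.comp (ext φ)

def CommutesWithGraphs (ext : ExtFamily T) : Prop :=
  ∀ (X Y Z : QCat Q) (f : QFun X Y) (ψ : QDist Y Z),
    ext (ψ.comp f.graph) = (ext ψ).comp (T.map f).graph

def IsLaxOnFunctors (ext : ExtFamily T) : Prop :=
  ∀ (X Y : QCat Q) (f : QFun X Y),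
    (T.map f).graph ≤ ext f.graph ∧ (T.map f).cograph ≤ ext f.cograph

variable {ext : ExtFamily T}

theorem IsLaxOnFunctors.isLaxUnital (h : ext.IsLaxOnFunctors) : ext.IsLaxUnital := fun X => by
  simpa only [T.map_id, QFun.id_graph] using (h X X (QFun.id X)).1

theorem IsLaxUnital.homDist_le_ext_cograph_comp_graph (hmono : ext.IsMonotone)
    (hunit : ext.IsLaxUnital) {X Y : QCat Q} (f : QFun X Y) :
    (T.obj X).homDist ≤ ext (f.cograph.comp f.graph) :=
  (hunit X).trans (hmono _ _ _ _ f.homDist_le_cograph_comp_graph)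

theorem CommutesWithCographs.isLaxOnFunctors (hmono : ext.IsMonotone)
    (hunit : ext.IsLaxUnital) (hco : ext.CommutesWithCographs) : ext.IsLaxOnFunctors := by
  intro X Y f
  constructor
  · have h : (T.obj X).homDist ≤ (T.map f).cograph.comp (ext f.graph) := by
      rw [← hco]
      exact hunit.homDist_le_ext_cograph_comp_graph hmono f
    simpa only [QDist.comp_homDist] using ((T.map f).graph_comp_le_iff).2 h
  · calc (T.map f).cograph
        = (T.map f).cograph.comp (T.obj Y).homDist := (QDist.comp_homDist _).symm
      _ ≤ (T.map f).cograph.comp (ext Y.homDist) := QDist.comp_mono le_rfl (hunit Y)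
      _ = ext f.cograph := by rw [← hco, QDist.comp_homDist]

theorem IsLaxOnFunctors.commutesWithCographs (hmono : ext.IsMonotone)
    (hlax : ext.IsLaxFunctorial) (h : ext.IsLaxOnFunctors) : ext.CommutesWithCographs := by
  intro X Y Z f φ
  apply le_antisymm
  · rw [← (T.map f).graph_comp_le_iff]
    calc (T.map f).graph.comp (ext (f.cograph.comp φ))
        ≤ (ext f.graph).comp (ext (f.cograph.comp φ)) := QDist.comp_mono (h X Y f).1 le_rfl
      _ ≤ ext (f.graph.comp (f.cograph.comp φ)) := hlax _ _ _ _ _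
      _ ≤ ext φ := hmono _ _ _ _ (f.graph_comp_le_iff.2 le_rfl)
  · calc (T.map f).cograph.comp (ext φ)
        ≤ (ext f.cograph).comp (ext φ) := QDist.comp_mono (h X Y f).2 le_rfl
      _ ≤ ext (f.cograph.comp φ) := hlax _ _ _ _ _

theorem CommutesWithGraphs.isLaxOnFunctors (hmono : ext.IsMonotone)
    (hunit : ext.IsLaxUnital) (hgr : ext.CommutesWithGraphs) : ext.IsLaxOnFunctors := by
  intro X Y f
  constructor
  · calc (T.map f).graph
        = (T.obj Y).homDist.comp (T.map f).graph := (QDist.homDist_comp _).symm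
      _ ≤ (ext Y.homDist).comp (T.map f).graph := QDist.comp_mono (hunit Y) le_rfl
      _ = ext f.graph := by rw [← hgr, QDist.homDist_comp]
  · have h : (T.obj X).homDist ≤ (ext f.cograph).comp (T.map f).graph := by
      rw [← hgr]
      exact hunit.homDist_le_ext_cograph_comp_graph hmono f
    simpa only [QDist.homDist_comp] using ((T.map f).comp_cograph_le_iff).2 h

theorem IsLaxOnFunctors.commutesWithGraphs (hmono : ext.IsMonotone)
    (hlax : ext.IsLaxFunctorial) (h : ext.IsLaxOnFunctors) : ext.CommutesWithGraphs := by
  intro X Y Z f ψ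
  apply le_antisymm
  · rw [← (T.map f).comp_cograph_le_iff]
    calc (ext (ψ.comp f.graph)).comp (T.map f).cograph
        ≤ (ext (ψ.comp f.graph)).comp (ext f.cograph) := QDist.comp_mono le_rfl (h X Y f).2
      _ ≤ ext ((ψ.comp f.graph).comp f.cograph) := hlax _ _ _ _ _
      _ ≤ ext ψ := hmono _ _ _ _ (f.comp_cograph_le_iff.2 le_rfl)
  · calc (ext ψ).comp (T.map f).graph
        ≤ (ext ψ).comp (ext f.graph) := QDist.comp_mono le_rfl (h X Y f).1
      _ ≤ ext (ψ.comp f.graph) := hlax _ _ _ _ _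

theorem isLaxUnital_and_commutesWithCographs_iff (hmono : ext.IsMonotone)
    (hlax : ext.IsLaxFunctorial) :
    ext.IsLaxUnital ∧ ext.CommutesWithCographs ↔ ext.IsLaxOnFunctors :=
  ⟨fun ⟨hunit, hco⟩ => hco.isLaxOnFunctors hmono hunit,
    fun h => ⟨h.isLaxUnital, h.commutesWithCographs hmono hlax⟩⟩

theorem isLaxUnital_and_commutesWithGraphs_iff (hmono : ext.IsMonotone)
    (hlax : ext.IsLaxFunctorial) :
    ext.IsLaxUnital ∧ ext.CommutesWithGraphs ↔ ext.IsLaxOnFunctors :=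
  ⟨fun ⟨hunit, hgr⟩ => hgr.isLaxOnFunctors hmono hunit,
    fun h => ⟨h.isLaxUnital, h.commutesWithGraphs hmono hlax⟩⟩

end ExtFamily

/-- for a 2-functor `T` on `Q`-Cat and a family `T̂` of distributors
satisfying (1) monotonicity and (2) lax functoriality, the conditions
(i) `1_{TX}^* ≤ T̂ 1_X^*` and `T̂(f^* ∘ φ) = (Tf)^* ∘ T̂φ`,
(ii) `1_{TX}^* ≤ T̂ 1_X^*` and `T̂(ψ ∘ f_*) = T̂ψ ∘ (Tf)_*`, and
(iii) `(Tf)_* ≤ T̂(f_*)` and `(Tf)^* ≤ T̂(f^*)`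
are equivalent. -/
theorem statement14 (Q : Quantaloid.{u}) (T : TwoFunctor Q) (ext : ExtFamily T)
    (h1 : ∀ (X Y : QCat Q) (φ φ' : QDist X Y), φ ≤ φ' → ext φ ≤ ext φ')
    (h2 : ∀ (X Y Z : QCat Q) (φ : QDist X Y) (ψ : QDist Y Z),
      (ext ψ).comp (ext φ) ≤ ext (ψ.comp φ)) :
    -- (i) ↔ (iii)
    ((((∀ X : QCat Q, (T.obj X).homDist ≤ ext X.homDist) ∧
       (∀ (X Y Z : QCat Q) (f : QFun X Y) (φ : QDist Z Y),
         ext (f.cograph.comp φ) = ((T.map f).cograph).comp (ext φ)))) ↔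
      (∀ (X Y : QCat Q) (f : QFun X Y),
        (T.map f).graph ≤ ext f.graph ∧ (T.map f).cograph ≤ ext f.cograph)) ∧
    -- (ii) ↔ (iii)
    ((((∀ X : QCat Q, (T.obj X).homDist ≤ ext X.homDist) ∧
       (∀ (X Y Z : QCat Q) (f : QFun X Y) (ψ : QDist Y Z),
         ext (ψ.comp f.graph) = (ext ψ).comp (T.map f).graph))) ↔
      (∀ (X Y : QCat Q) (f : QFun X Y),
        (T.map f).graph ≤ ext f.graph ∧ (T.map f).cograph ≤ ext f.cograph)) := by
  exact ⟨ExtFamily.isLaxUnital_and_commutesWithCographs_iff h1 h2,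
    ExtFamily.isLaxUnital_and_commutesWithGraphs_iff h1 h2⟩

end QT
end
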